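/- arXiv:2405.20724 — 5 statements merged into one kernel-verified Lean document; each statement's English description precedes it below -/
import Mathlib

section
/- Let H be a real Hilbert space, g, g* ∈ H, w ∈ H, δ ≥ 0, and C ≥ 0. Suppose that for every t ∈ ℝ, ‖g − (g* + t·w)‖² ≥ ‖g − g*‖²/(1+δ) − C·‖g‖². Suppose also ‖g − g*‖² ≤ (1+δ)‖g‖². Then |⟨w, g − g*⟩| ≤ ‖w‖·‖g‖·√(C + δ). -/
open scoped RealInnerProductSpace

/-- Quadratic/discriminant step of the constructive regularity lemma. -/
theorem stmt1 {H : Type*} [NormedAddCommGroup H] [InnerProductSpace ℝ H]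
    (g gstar w : H) (δ C : ℝ) (hδ : 0 ≤ δ) (hC : 0 ≤ C)
    (hquad : ∀ t : ℝ,
      ‖g - gstar‖ ^ 2 / (1 + δ) - C * ‖g‖ ^ 2 ≤ ‖g - (gstar + t • w)‖ ^ 2)
    (hclose : ‖g - gstar‖ ^ 2 ≤ (1 + δ) * ‖g‖ ^ 2) :
    |(inner ℝ w (g - gstar) : ℝ)| ≤ ‖w‖ * ‖g‖ * Real.sqrt (C + δ) := by
  have hδ1 : (0:ℝ) < 1 + δ := by linarith
  set r := g - gstar with hr
  set x : ℝ := inner ℝ w r with hx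
  have key : ∀ t : ℝ, 0 ≤ ‖w‖ ^ 2 * (t * t) + (-(2 * x)) * t +
      (C * ‖g‖ ^ 2 + (1 - 1 / (1 + δ)) * ‖r‖ ^ 2) := by
    intro t
    have h := hquad t
    have hrw : g - (gstar + t • w) = r - t • w := by rw [hr]; abel
    have expand : ‖g - (gstar + t • w)‖ ^ 2
        = ‖r‖ ^ 2 - 2 * (t * x) + t ^ 2 * ‖w‖ ^ 2 := by
      rw [hrw, @norm_sub_sq_real, real_inner_smul_right, norm_smul,
        Real.norm_eq_abs, mul_pow, sq_abs, real_inner_comm, ← hx]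
    rw [expand] at h
    have hdiv : ‖r‖ ^ 2 / (1 + δ) = (1 / (1 + δ)) * ‖r‖ ^ 2 := by ring
    rw [hdiv] at h
    nlinarith [h]
  have hd := discrim_le_zero key
  simp only [discrim] at hd
  have hc : C * ‖g‖ ^ 2 + (1 - 1 / (1 + δ)) * ‖r‖ ^ 2 ≤ (C + δ) * ‖g‖ ^ 2 := by
    have h1 : (1 - 1 / (1 + δ)) = δ / (1 + δ) := by field_simp; ring
    rw [h1]
    have h2 : δ / (1 + δ) * ‖r‖ ^ 2 ≤ δ / (1 + δ) * ((1 + δ) * ‖g‖ ^ 2) := by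
      apply mul_le_mul_of_nonneg_left hclose (by positivity)
    have h3 : δ / (1 + δ) * ((1 + δ) * ‖g‖ ^ 2) = δ * ‖g‖ ^ 2 := by
      field_simp
    nlinarith
  have hx2 : x ^ 2 ≤ ‖w‖ ^ 2 * ((C + δ) * ‖g‖ ^ 2) := by
    nlinarith [sq_nonneg ‖w‖]
  have hs : Real.sqrt (C + δ) ^ 2 = C + δ := Real.sq_sqrt (by linarith)
  have hrhs : 0 ≤ ‖w‖ * ‖g‖ * Real.sqrt (C + δ) := by positivity
  have hM : (‖w‖ * ‖g‖ * Real.sqrt (C + δ)) ^ 2 = ‖w‖ ^ 2 * ((C + δ) * ‖g‖ ^ 2) := by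
    rw [mul_pow, mul_pow, hs]; ring
  have h4 := Real.sqrt_le_sqrt (hx2.trans_eq hM.symm)
  rwa [Real.sqrt_sq_eq_abs, Real.sqrt_sq hrhs] at h4
end

section
/- (Monte Carlo approximation of a symmetric matrix average from 1D samples.) Let i_1, ..., i_M be i.i.d. uniform on {1,...,N} and A ∈ ℝ^{N×N} symmetric with all entries in [−1,1]. Then for every 0 < p < 1, with probability at least 1 − p, |(1/N²)Σ_{j,n} a_{j,n} − (1/M²)Σ_{m,l} a_{i_m, i_l}| ≤ 2·√((2 log(1/p) + 2 log N + 2 log 2)/M). -/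
open MeasureTheory ProbabilityTheory

open Real

lemma hoeffding_core (q : ℝ) (hq0 : 0 ≤ q) (hq1 : q ≤ 1) (u : ℝ) :
    q * Real.exp (u * (1 - q)) + (1 - q) * Real.exp (-(u * q)) ≤ Real.exp (u ^ 2 / 8) := by
  rcases eq_or_lt_of_le hq0 with h0 | h0
  · rw [← h0]
    simpa using Real.one_le_exp (by positivity : (0:ℝ) ≤ u ^ 2 / 8)
  rcases eq_or_lt_of_le hq1 with h1 | h1
  · rw [h1]
    simpa using Real.one_le_exp (by positivity : (0:ℝ) ≤ u ^ 2 / 8)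
  set g : ℝ → ℝ := fun x => q * Real.exp (x * (1 - q)) + (1 - q) * Real.exp (-(x * q)) with hgdef
  set g1 : ℝ → ℝ := fun x => q * (1 - q) * (Real.exp (x * (1 - q)) - Real.exp (-(x * q))) with hg1def
  set g2 : ℝ → ℝ := fun x =>
    q * (1 - q) * ((1 - q) * Real.exp (x * (1 - q)) + q * Real.exp (-(x * q))) with hg2def
  have hq1' : (0:ℝ) < 1 - q := by linarith
  have hg : ∀ x, 0 < g x := fun x => by
    have := Real.exp_pos (x * (1 - q)); have := Real.exp_pos (-(x * q)); positivity
  have e1 : ∀ x : ℝ, HasDerivAt (fun x : ℝ => Real.exp (x * (1 - q)))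
      (Real.exp (x * (1 - q)) * (1 - q)) x := fun x => by
    simpa using ((hasDerivAt_id x).mul_const (1 - q)).exp
  have e2 : ∀ x : ℝ, HasDerivAt (fun x : ℝ => Real.exp (-(x * q)))
      (Real.exp (-(x * q)) * (-q)) x := fun x => by
    simpa using (((hasDerivAt_id x).mul_const q).neg).exp
  have hdg : ∀ x, HasDerivAt g (g1 x) x := by
    intro x
    have := ((e1 x).const_mul q).add ((e2 x).const_mul (1 - q))
    refine this.congr_deriv ?_
    simp only [hg1def]; ring
  have hdg1 : ∀ x, HasDerivAt g1 (g2 x) x := by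
    intro x
    have := ((e1 x).sub (e2 x)).const_mul (q * (1 - q))
    refine this.congr_deriv ?_
    simp only [hg2def]; ring
  set ψ : ℝ → ℝ := fun x => x / 4 - g1 x / g x with hψdef
  have hdψ : ∀ x, HasDerivAt ψ (1 / 4 - (g2 x * g x - g1 x * g1 x) / (g x) ^ 2) x := by
    intro x
    exact ((hasDerivAt_id x).div_const 4).sub ((hdg1 x).div (hdg x) (hg x).ne')
  have hψ'nonneg : ∀ x, 0 ≤ 1 / 4 - (g2 x * g x - g1 x * g1 x) / (g x) ^ 2 := by
    intro x
    rw [sub_nonneg, div_le_iff₀ (by positivity)]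
    simp only [hgdef, hg1def, hg2def]
    nlinarith [sq_nonneg (q * Real.exp (x * (1 - q)) - (1 - q) * Real.exp (-(x * q))),
      mul_pos (Real.exp_pos (x * (1 - q))) (Real.exp_pos (-(x * q)))]
  have hψmono : Monotone ψ :=
    monotone_of_deriv_nonneg (fun x => (hdψ x).differentiableAt) (fun x => by
      rw [(hdψ x).deriv]; exact hψ'nonneg x)
  have hψ0 : ψ 0 = 0 := by simp [hψdef, hg1def]
  set φ : ℝ → ℝ := fun x => x ^ 2 / 8 - Real.log (g x) with hφdef
  have hdφ : ∀ x, HasDerivAt φ (ψ x) x := by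
    intro x
    have h1 : HasDerivAt (fun x : ℝ => x ^ 2 / 8) (x / 4) x := by
      have := (hasDerivAt_pow 2 x).div_const 8
      refine this.congr_deriv ?_; ring
    exact h1.sub ((hdg x).log (hg x).ne')
  have hφdiff : Differentiable ℝ φ := fun x => (hdφ x).differentiableAt
  have hφ0 : φ 0 = 0 := by simp [hφdef, hgdef]
  have key : 0 ≤ φ u := by
    rcases le_or_gt 0 u with hu | hu
    · have hmono : MonotoneOn φ (Set.Ici (0:ℝ)) := by
        apply monotoneOn_of_deriv_nonneg (convex_Ici 0) hφdiff.continuous.continuousOn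
          hφdiff.differentiableOn
        intro x hx
        rw [(hdφ x).deriv, ← hψ0]
        exact hψmono (le_of_lt (by simpa using hx))
      calc (0:ℝ) = φ 0 := hφ0.symm
      _ ≤ φ u := hmono (by simp) (by simpa using hu) hu
    · have hanti : AntitoneOn φ (Set.Iic (0:ℝ)) := by
        apply antitoneOn_of_deriv_nonpos (convex_Iic 0) hφdiff.continuous.continuousOn
          hφdiff.differentiableOn
        intro x hx
        rw [(hdφ x).deriv, ← hψ0]
        exact hψmono (le_of_lt (by simpa using hx))
      calc (0:ℝ) = φ 0 := hφ0.symm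
      _ ≤ φ u := hanti (by simpa using hu.le) (by simp) hu.le
  have hlog : Real.log (g u) ≤ u ^ 2 / 8 := by
    simp only [hφdef] at key; linarith
  calc g u = Real.exp (Real.log (g u)) := (Real.exp_log (hg u)).symm
  _ ≤ Real.exp (u ^ 2 / 8) := Real.exp_le_exp.mpr hlog

lemma exp_le_convex (s y : ℝ) (hy : |y| ≤ 1) :
    Real.exp (s * y) ≤ (1 - y) / 2 * Real.exp (-s) + (1 + y) / 2 * Real.exp s := by
  rw [abs_le] at hy
  have h := convexOn_exp.2 (Set.mem_univ (-s)) (Set.mem_univ s)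
    (by linarith : (0:ℝ) ≤ (1 - y) / 2) (by linarith : (0:ℝ) ≤ (1 + y) / 2) (by ring)
  rw [show s * y = (1 - y) / 2 * (-s) + (1 + y) / 2 * s by ring]
  simpa [smul_eq_mul] using h



lemma mgf_avg_le (N : ℕ) [NeZero N] (c : Fin N → ℝ) (hc : ∀ j, |c j| ≤ 1) (s : ℝ) :
    ∑ j, ((N:ℝ))⁻¹ * Real.exp (s * (c j - (∑ k, c k) / N)) ≤ Real.exp (s ^ 2 / 2) := by
  have hN : (0:ℝ) < N := by exact_mod_cast Nat.pos_of_ne_zero (NeZero.ne N)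
  set μ : ℝ := (∑ k, c k) / N with hμdef
  have hμ : |μ| ≤ 1 := by
    rw [hμdef, abs_div, abs_of_pos hN, div_le_one hN]
    calc |∑ k, c k| ≤ ∑ k, |c k| := Finset.abs_sum_le_sum_abs _ _
    _ ≤ ∑ _k : Fin N, (1:ℝ) := Finset.sum_le_sum fun k _ => hc k
    _ = N := by simp
  have hμ1 : -1 ≤ μ ∧ μ ≤ 1 := abs_le.mp hμ
  have step1 : ∑ j, ((N:ℝ))⁻¹ * Real.exp (s * (c j - μ)) =
      Real.exp (-(s * μ)) * ∑ j, ((N:ℝ))⁻¹ * Real.exp (s * c j) := by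
    rw [Finset.mul_sum]
    apply Finset.sum_congr rfl
    intro j _
    rw [show s * (c j - μ) = -(s * μ) + s * c j by ring, Real.exp_add]
    ring
  have step2 : ∑ j, ((N:ℝ))⁻¹ * Real.exp (s * c j) ≤
      (1 - μ) / 2 * Real.exp (-s) + (1 + μ) / 2 * Real.exp s := by
    rw [← Finset.mul_sum]
    have h1 : ∑ j, Real.exp (s * c j) ≤
        ∑ j, ((1 - c j) / 2 * Real.exp (-s) + (1 + c j) / 2 * Real.exp s) :=
      Finset.sum_le_sum fun j _ => exp_le_convex s (c j) (hc j)
    have h2 : ∑ j, ((1 - c j) / 2 * Real.exp (-s) + (1 + c j) / 2 * Real.exp s) =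
        ((N : ℝ) - ∑ k, c k) / 2 * Real.exp (-s) + ((N : ℝ) + ∑ k, c k) / 2 * Real.exp s := by
      rw [Finset.sum_add_distrib, ← Finset.sum_mul, ← Finset.sum_mul, ← Finset.sum_div,
        ← Finset.sum_div, Finset.sum_sub_distrib, Finset.sum_add_distrib]
      simp
    rw [hμdef]
    have := h1.trans_eq h2
    calc ((N:ℝ))⁻¹ * ∑ j, Real.exp (s * c j)
        ≤ ((N:ℝ))⁻¹ * (((N : ℝ) - ∑ k, c k) / 2 * Real.exp (-s)
            + ((N : ℝ) + ∑ k, c k) / 2 * Real.exp s) := by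
          exact mul_le_mul_of_nonneg_left this (by positivity)
    _ = (1 - (∑ k, c k) / N) / 2 * Real.exp (-s) + (1 + (∑ k, c k) / N) / 2 * Real.exp s := by
          field_simp
  have step3 : Real.exp (-(s * μ)) * ((1 - μ) / 2 * Real.exp (-s) + (1 + μ) / 2 * Real.exp s) =
      (1 + μ) / 2 * Real.exp ((2 * s) * (1 - (1 + μ) / 2))
        + (1 - (1 + μ) / 2) * Real.exp (-((2 * s) * ((1 + μ) / 2))) := by
    rw [show (2 * s) * (1 - (1 + μ) / 2) = s + -(s * μ) by ring,
      show -((2 * s) * ((1 + μ) / 2)) = -s + -(s * μ) by ring, Real.exp_add, Real.exp_add]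
    ring
  calc ∑ j, ((N:ℝ))⁻¹ * Real.exp (s * (c j - μ))
      ≤ Real.exp (-(s * μ)) * ((1 - μ) / 2 * Real.exp (-s) + (1 + μ) / 2 * Real.exp s) := by
        rw [step1]; exact mul_le_mul_of_nonneg_left step2 (Real.exp_pos _).le
  _ ≤ Real.exp ((2 * s) ^ 2 / 8) := by
        rw [step3]
        exact hoeffding_core ((1 + μ) / 2) (by linarith [hμ1.1]) (by linarith [hμ1.2]) (2 * s)
  _ = Real.exp (s ^ 2 / 2) := by norm_num; ring_nf




lemma tail_one_sided {Ω : Type*} [MeasurableSpace Ω] (P : Measure Ω) [IsProbabilityMeasure P]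
    (N M : ℕ) [NeZero N]
    (i : Fin M → Ω → Fin N) (hmeas : ∀ m, Measurable (i m))
    (hindep : iIndepFun i P)
    (hunif : ∀ m, Measure.map (i m) P = (PMF.uniformOfFintype (Fin N)).toMeasure)
    (c : Fin N → ℝ) (hc : ∀ j, |c j| ≤ 1) (t : ℝ) (ht : 0 ≤ t) :
    (P {ω | (M : ℝ) * t ≤ ∑ m, (c (i m ω) - (∑ k, c k) / N)}).toReal ≤
      Real.exp (-((M : ℝ) * t ^ 2 / 2)) := by
  set μ : ℝ := (∑ k, c k) / N with hμdef
  set Y : Fin M → Ω → ℝ := fun m ω => c (i m ω) - μ with hYdef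
  have hYmeas : ∀ m, Measurable (Y m) := fun m =>
    (measurable_from_top (f := fun k : Fin N => c k - μ)).comp (hmeas m)
  have hYindep : iIndepFun Y P :=
    hindep.comp (fun _ k => c k - μ) (fun _ => measurable_from_top)
  have hYint : ∀ (s : ℝ) m, Integrable (fun ω => Real.exp (s * Y m ω)) P := by
    intro s m
    have : (fun ω => Real.exp (s * Y m ω)) =
        (fun k : Fin N => Real.exp (s * (c k - μ))) ∘ (i m) := rfl
    rw [this, ← integrable_map_measure (by exact measurable_from_top.aestronglyMeasurable)
      (hmeas m).aemeasurable]
    exact Integrable.of_finite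
  have hmgf : ∀ m, mgf (Y m) P t ≤ Real.exp (t ^ 2 / 2) := by
    intro m
    have h1 : mgf (Y m) P t = ∫ ω, (fun k : Fin N => Real.exp (t * (c k - μ))) (i m ω) ∂P := rfl
    have h2 : ∫ ω, (fun k : Fin N => Real.exp (t * (c k - μ))) (i m ω) ∂P =
        ∫ k, Real.exp (t * (c k - μ)) ∂((PMF.uniformOfFintype (Fin N)).toMeasure) := by
      rw [← hunif m, integral_map (hmeas m).aemeasurable
        (by exact measurable_from_top.aestronglyMeasurable)]
    rw [h1, h2, PMF.integral_eq_sum]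
    have h3 : ∀ k : Fin N, ((PMF.uniformOfFintype (Fin N)) k).toReal = ((N:ℝ))⁻¹ := by
      intro k
      rw [PMF.uniformOfFintype_apply]
      simp
    calc ∑ k, ((PMF.uniformOfFintype (Fin N)) k).toReal • Real.exp (t * (c k - μ))
        = ∑ k, ((N:ℝ))⁻¹ * Real.exp (t * (c k - μ)) := by
          apply Finset.sum_congr rfl; intro k _; rw [h3 k, smul_eq_mul]
    _ ≤ Real.exp (t ^ 2 / 2) := mgf_avg_le N c hc t
  have hint_sum : Integrable (fun ω => Real.exp (t * ∑ m, Y m ω)) P := by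
    apply Integrable.mono' (integrable_const (Real.exp (|t| * (2 * M))))
    · exact (Measurable.exp (by
        exact (measurable_const.mul (Finset.measurable_sum _ fun m _ => hYmeas m)))).aestronglyMeasurable
    · filter_upwards with ω
      rw [Real.norm_eq_abs, Real.abs_exp, Real.exp_le_exp]
      have hb : |∑ m, Y m ω| ≤ 2 * M := by
        calc |∑ m, Y m ω| ≤ ∑ m, |Y m ω| := Finset.abs_sum_le_sum_abs _ _
        _ ≤ ∑ _m : Fin M, (2:ℝ) := by
            apply Finset.sum_le_sum
            intro m _
            have h1 := hc (i m ω)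
            have hμ : |μ| ≤ 1 := by
              have hN : (0:ℝ) < N := by exact_mod_cast Nat.pos_of_ne_zero (NeZero.ne N)
              rw [hμdef, abs_div, abs_of_pos hN, div_le_one hN]
              calc |∑ k, c k| ≤ ∑ k, |c k| := Finset.abs_sum_le_sum_abs _ _
              _ ≤ ∑ _k : Fin N, (1:ℝ) := Finset.sum_le_sum fun k _ => hc k
              _ = N := by simp
            calc |Y m ω| ≤ |c (i m ω)| + |μ| := abs_sub _ _
            _ ≤ 2 := by linarith
        _ = 2 * M := by simp [mul_comm]
      calc t * ∑ m, Y m ω ≤ |t * ∑ m, Y m ω| := le_abs_self _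
      _ = |t| * |∑ m, Y m ω| := abs_mul _ _
      _ ≤ |t| * (2 * M) := by
          exact mul_le_mul_of_nonneg_left hb (abs_nonneg t)
  have chernoff := measure_ge_le_exp_mul_mgf (X := fun ω => ∑ m, Y m ω) (μ := P)
    ((M : ℝ) * t) ht hint_sum
  have hmgfsum : mgf (fun ω => ∑ m, Y m ω) P t ≤ Real.exp ((M:ℝ) * (t ^ 2 / 2)) := by
    have he : (fun ω => ∑ m, Y m ω) = ∑ m, Y m := by
      funext ω; rw [Finset.sum_apply]
    rw [he, hYindep.mgf_sum hYmeas Finset.univ]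
    calc ∏ m, mgf (Y m) P t ≤ ∏ _m : Fin M, Real.exp (t ^ 2 / 2) :=
          Finset.prod_le_prod (fun m _ => mgf_nonneg) (fun m _ => hmgf m)
    _ = Real.exp ((M:ℝ) * (t ^ 2 / 2)) := by
        rw [Finset.prod_const, ← Real.exp_nat_mul]
        simp
  calc (P {ω | (M : ℝ) * t ≤ ∑ m, (c (i m ω) - μ)}).toReal
      ≤ Real.exp (-t * ((M:ℝ) * t)) * mgf (fun ω => ∑ m, Y m ω) P t := chernoff
  _ ≤ Real.exp (-t * ((M:ℝ) * t)) * Real.exp ((M:ℝ) * (t ^ 2 / 2)) :=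
      mul_le_mul_of_nonneg_left hmgfsum (Real.exp_pos _).le
  _ = Real.exp (-((M : ℝ) * t ^ 2 / 2)) := by
      rw [← Real.exp_add]; congr 1; ring

lemma pointwise_bound (N M : ℕ) [NeZero N] (hM : 0 < M)
    (A : Fin N → Fin N → ℝ) (hsymm : ∀ j n, A j n = A n j)
    (f : Fin M → Fin N) (t : ℝ)
    (h : ∀ n, |∑ m, (A (f m) n - (∑ j, A j n) / N)| ≤ M * t) :
    |(1 / (N : ℝ) ^ 2) * ∑ j, ∑ n, A j n
      - (1 / (M : ℝ) ^ 2) * ∑ m, ∑ l, A (f m) (f l)| ≤ 2 * t := by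
  have hN : (0:ℝ) < N := by exact_mod_cast Nat.pos_of_ne_zero (NeZero.ne N)
  have hM' : (0:ℝ) < M := by exact_mod_cast hM
  set D : Fin N → ℝ := fun n => ∑ m, (A (f m) n - (∑ j, A j n) / N) with hD
  have hDsum : ∀ n, D n = (∑ m, A (f m) n) - (M : ℝ) * ((∑ j, A j n) / N) := by
    intro n
    simp only [hD, Finset.sum_sub_distrib, Finset.sum_const, Finset.card_univ,
      Fintype.card_fin, nsmul_eq_mul]
  set T1 : ℝ := (1 / ((N:ℝ) * M)) * ∑ m, ∑ n, A (f m) n with hT1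
  have key1 : (1 / (N : ℝ) ^ 2) * (∑ j, ∑ n, A j n) - T1 = -(1 / ((N:ℝ) * M)) * ∑ n, D n := by
    rw [hT1]
    have e1 : ∑ n, D n = (∑ n, ∑ m, A (f m) n) - (M : ℝ) * ((∑ n, ∑ j, A j n) / N) := by
      simp_rw [hDsum]
      rw [Finset.sum_sub_distrib, ← Finset.mul_sum, ← Finset.sum_div]
    rw [e1, Finset.sum_comm (f := fun n m => A (f m) n),
      Finset.sum_comm (f := fun n j => A j n)]
    field_simp
    ring
  have key2 : T1 - (1 / (M : ℝ) ^ 2) * (∑ m, ∑ l, A (f m) (f l))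
      = -(1 / (M:ℝ) ^ 2) * ∑ m, D (f m) := by
    rw [hT1]
    have e1 : ∑ m, D (f m) =
        (∑ m, ∑ l, A (f m) (f l)) - (M : ℝ) * ((∑ m, ∑ n, A (f m) n) / N) := by
      simp_rw [hDsum]
      rw [Finset.sum_sub_distrib]
      congr 1
      · exact Finset.sum_comm (s := Finset.univ) (t := Finset.univ) (f := fun m l => A (f l) (f m))
      · rw [← Finset.mul_sum, ← Finset.sum_div]
        congr 2
        apply Finset.sum_congr rfl; intro m _
        apply Finset.sum_congr rfl; intro j _
        exact hsymm j (f m)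
    rw [e1]
    field_simp
    ring
  have hb1 : |∑ n, D n| ≤ (N : ℝ) * ((M:ℝ) * t) := by
    calc |∑ n, D n| ≤ ∑ n, |D n| := Finset.abs_sum_le_sum_abs _ _
    _ ≤ ∑ _n : Fin N, (M:ℝ) * t := Finset.sum_le_sum fun n _ => h n
    _ = (N : ℝ) * ((M:ℝ) * t) := by simp [mul_comm]
  have hb2 : |∑ m, D (f m)| ≤ (M : ℝ) * ((M:ℝ) * t) := by
    calc |∑ m, D (f m)| ≤ ∑ m, |D (f m)| := Finset.abs_sum_le_sum_abs _ _
    _ ≤ ∑ _m : Fin M, (M:ℝ) * t := Finset.sum_le_sum fun m _ => h (f m)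
    _ = (M : ℝ) * ((M:ℝ) * t) := by simp [mul_comm]
  have habs1 : |(1 / (N : ℝ) ^ 2) * (∑ j, ∑ n, A j n) - T1| ≤ t := by
    rw [key1, abs_mul, abs_neg, abs_of_pos (by positivity : (0:ℝ) < 1 / ((N:ℝ) * M))]
    calc 1 / ((N:ℝ) * M) * |∑ n, D n| ≤ 1 / ((N:ℝ) * M) * ((N : ℝ) * ((M:ℝ) * t)) :=
        mul_le_mul_of_nonneg_left hb1 (by positivity)
    _ = t := by field_simp; try ring
  have habs2 : |T1 - (1 / (M : ℝ) ^ 2) * (∑ m, ∑ l, A (f m) (f l))| ≤ t := by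
    rw [key2, abs_mul, abs_neg, abs_of_pos (by positivity : (0:ℝ) < 1 / (M:ℝ) ^ 2)]
    calc 1 / (M:ℝ) ^ 2 * |∑ m, D (f m)| ≤ 1 / (M:ℝ) ^ 2 * ((M : ℝ) * ((M:ℝ) * t)) :=
        mul_le_mul_of_nonneg_left hb2 (by positivity)
    _ = t := by field_simp; try ring
  calc |(1 / (N : ℝ) ^ 2) * ∑ j, ∑ n, A j n - (1 / (M : ℝ) ^ 2) * ∑ m, ∑ l, A (f m) (f l)|
      ≤ |(1 / (N : ℝ) ^ 2) * (∑ j, ∑ n, A j n) - T1|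
        + |T1 - (1 / (M : ℝ) ^ 2) * (∑ m, ∑ l, A (f m) (f l))| := abs_sub_le _ _ _
  _ ≤ t + t := add_le_add habs1 habs2
  _ = 2 * t := by ring


lemma tail_two_sided {Ω : Type*} [MeasurableSpace Ω] (P : MeasureTheory.Measure Ω)
    [MeasureTheory.IsProbabilityMeasure P] (N M : ℕ) [NeZero N]
    (i : Fin M → Ω → Fin N) (hmeas : ∀ m, Measurable (i m))
    (hindep : ProbabilityTheory.iIndepFun i P)
    (hunif : ∀ m, MeasureTheory.Measure.map (i m) P = (PMF.uniformOfFintype (Fin N)).toMeasure)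
    (c : Fin N → ℝ) (hc : ∀ j, |c j| ≤ 1) (t : ℝ) (ht : 0 ≤ t) :
    P {ω | (M : ℝ) * t < |∑ m, (c (i m ω) - (∑ k, c k) / N)|} ≤
      ENNReal.ofReal (2 * Real.exp (-((M : ℝ) * t ^ 2 / 2))) := by
  set S : Ω → ℝ := fun ω => ∑ m, (c (i m ω) - (∑ k, c k) / N) with hS
  have hsub : {ω | (M : ℝ) * t < |S ω|} ⊆
      {ω | (M : ℝ) * t ≤ S ω} ∪ {ω | (M : ℝ) * t ≤ -S ω} := by
    intro ω hω
    have hω' : (M : ℝ) * t < |S ω| := hω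
    rcases abs_cases (S ω) with ⟨h1, _⟩ | ⟨h1, _⟩
    · left; show (M : ℝ) * t ≤ S ω; rw [← h1]; exact hω'.le
    · right; show (M : ℝ) * t ≤ -S ω; rw [← h1]; exact hω'.le
  have h1 : P {ω | (M : ℝ) * t ≤ S ω} ≤ ENNReal.ofReal (Real.exp (-((M : ℝ) * t ^ 2 / 2))) := by
    rw [ENNReal.le_ofReal_iff_toReal_le (MeasureTheory.measure_ne_top P _) (Real.exp_pos _).le]
    exact tail_one_sided P N M i hmeas hindep hunif c hc t ht
  have hneg : ∀ ω, ∑ m, ((-c) (i m ω) - (∑ k, (-c) k) / N) = -S ω := by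
    intro ω
    rw [hS, ← Finset.sum_neg_distrib]
    apply Finset.sum_congr rfl
    intro m _
    simp only [Pi.neg_apply, Finset.sum_neg_distrib]
    ring
  have h2 : P {ω | (M : ℝ) * t ≤ -S ω} ≤ ENNReal.ofReal (Real.exp (-((M : ℝ) * t ^ 2 / 2))) := by
    rw [ENNReal.le_ofReal_iff_toReal_le (MeasureTheory.measure_ne_top P _) (Real.exp_pos _).le]
    have := tail_one_sided P N M i hmeas hindep hunif (-c) (fun j => by simpa using hc j) t ht
    simp only [hneg] at this
    exact this
  calc P {ω | (M : ℝ) * t < |S ω|} ≤ P ({ω | (M : ℝ) * t ≤ S ω} ∪ {ω | (M : ℝ) * t ≤ -S ω}) :=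
      MeasureTheory.measure_mono hsub
  _ ≤ P {ω | (M : ℝ) * t ≤ S ω} + P {ω | (M : ℝ) * t ≤ -S ω} :=
      MeasureTheory.measure_union_le _ _
  _ ≤ ENNReal.ofReal (Real.exp (-((M : ℝ) * t ^ 2 / 2)))
      + ENNReal.ofReal (Real.exp (-((M : ℝ) * t ^ 2 / 2))) := add_le_add h1 h2
  _ = ENNReal.ofReal (2 * Real.exp (-((M : ℝ) * t ^ 2 / 2))) := by
      rw [← ENNReal.ofReal_add (Real.exp_pos _).le (Real.exp_pos _).le]
      congr 1; ring


/-- Monte Carlo approximation of a symmetric matrix average from 1D samples. -/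
theorem stmt6 {Ω : Type*} [MeasurableSpace Ω] (P : Measure Ω) [IsProbabilityMeasure P]
    (N M : ℕ) [NeZero N] (hM : 0 < M)
    (i : Fin M → Ω → Fin N) (hmeas : ∀ m, Measurable (i m))
    (hindep : iIndepFun i P)
    (hunif : ∀ m, Measure.map (i m) P = (PMF.uniformOfFintype (Fin N)).toMeasure)
    (A : Fin N → Fin N → ℝ) (hsymm : ∀ j n, A j n = A n j)
    (hA : ∀ j n, |A j n| ≤ 1)
    (p : ℝ) (hp0 : 0 < p) (hp1 : p < 1) :
    ENNReal.ofReal (1 - p) ≤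
      P {ω | |(1 / (N : ℝ) ^ 2) * ∑ j, ∑ n, A j n
              - (1 / (M : ℝ) ^ 2) * ∑ m, ∑ l, A (i m ω) (i l ω)|
          ≤ 2 * Real.sqrt ((2 * Real.log (1 / p) + 2 * Real.log N + 2 * Real.log 2) / M)} := by
  have hN : (0:ℝ) < N := by exact_mod_cast Nat.pos_of_ne_zero (NeZero.ne N)
  have hM' : (0:ℝ) < M := by exact_mod_cast hM
  have hlogp : 0 ≤ Real.log (1 / p) := by
    rw [one_div, Real.log_inv]
    linarith [Real.log_neg hp0 hp1]
  have hlogN : 0 ≤ Real.log N := Real.log_nonneg (by exact_mod_cast Nat.one_le_iff_ne_zero.mpr (NeZero.ne N))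
  have hlog2 : 0 ≤ Real.log 2 := Real.log_nonneg (by norm_num)
  set E : ℝ := 2 * Real.log (1 / p) + 2 * Real.log (N : ℝ) + 2 * Real.log 2 with hE
  have hE0 : 0 ≤ E := by positivity
  set t : ℝ := Real.sqrt (E / M) with htdef
  have ht0 : 0 ≤ t := Real.sqrt_nonneg _
  have ht2 : t ^ 2 = E / M := Real.sq_sqrt (by positivity)
  have hexp_eq : 2 * Real.exp (-((M : ℝ) * t ^ 2 / 2)) = p / N := by
    rw [ht2, show (M : ℝ) * (E / M) / 2 = E / 2 by field_simp]
    have : -(E / 2) = Real.log p - Real.log (N : ℝ) - Real.log 2 := by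
      rw [hE, one_div, Real.log_inv]; ring
    rw [this, Real.exp_sub, Real.exp_sub, Real.exp_log hp0, Real.exp_log hN,
      Real.exp_log (by norm_num : (0:ℝ) < 2)]
    field_simp
  set Bad : Fin N → Set Ω := fun n =>
    {ω | (M : ℝ) * t < |∑ m, (A (i m ω) n - (∑ j, A j n) / N)|} with hBad
  have hBadMeas : ∀ n, MeasurableSet (Bad n) := by
    intro n
    apply measurableSet_lt measurable_const
    apply Measurable.abs
    apply Finset.measurable_sum
    intro m _
    exact (measurable_from_top (f := fun k : Fin N => A k n - (∑ j, A j n) / N)).comp (hmeas m)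
  have hBadP : ∀ n, P (Bad n) ≤ ENNReal.ofReal (p / N) := by
    intro n
    rw [← hexp_eq]
    exact tail_two_sided P N M i hmeas hindep hunif (fun j => A j n) (fun j => hA j n) t ht0
  have hUnion : P (⋃ n, Bad n) ≤ ENNReal.ofReal p := by
    calc P (⋃ n, Bad n) ≤ ∑' n, P (Bad n) := measure_iUnion_le _
    _ = ∑ n, P (Bad n) := tsum_fintype _
    _ ≤ ∑ _n : Fin N, ENNReal.ofReal (p / N) := Finset.sum_le_sum fun n _ => hBadP n
    _ = (N : ENNReal) * ENNReal.ofReal (p / N) := by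
        rw [Finset.sum_const, Finset.card_univ, Fintype.card_fin, nsmul_eq_mul]
    _ = ENNReal.ofReal p := by
        rw [← ENNReal.ofReal_natCast N, ← ENNReal.ofReal_mul (by positivity)]
        congr 1
        field_simp
  have hsub : (⋃ n, Bad n)ᶜ ⊆
      {ω | |(1 / (N : ℝ) ^ 2) * ∑ j, ∑ n, A j n
              - (1 / (M : ℝ) ^ 2) * ∑ m, ∑ l, A (i m ω) (i l ω)| ≤ 2 * t} := by
    intro ω hω
    simp only [Set.mem_compl_iff, Set.mem_iUnion, not_exists] at hω
    have hpt : ∀ n, |∑ m, (A (i m ω) n - (∑ j, A j n) / N)| ≤ (M : ℝ) * t := by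
      intro n
      have h' := hω n
      rw [hBad] at h'
      simp only [Set.mem_setOf_eq] at h'
      exact not_lt.mp h'
    exact pointwise_bound N M hM A hsymm (fun m => i m ω) t hpt
  calc ENNReal.ofReal (1 - p) = 1 - ENNReal.ofReal p := by
        rw [← ENNReal.ofReal_one, ← ENNReal.ofReal_sub _ hp0.le]
  _ ≤ 1 - P (⋃ n, Bad n) := tsub_le_tsub_left hUnion 1
  _ = P ((⋃ n, Bad n)ᶜ) := (prob_compl_eq_one_sub (MeasurableSet.iUnion hBadMeas)).symm
  _ ≤ _ := measure_mono hsub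
end

section
/- (Graphon-signal constructive weak regularity, cut-norm bound from Frobenius near-minimality, graphon part.) Let H = L²([0,1]²) with inner product weighted by α > 0, let W ∈ H with ‖W‖_∞ ≤ 1, let Q be a set of bounded measurable functions [0,1] → ℝ containing all indicator functions of measurable sets, and let C* ∈ H. Suppose that for every q ∈ Q and r ∈ ℝ, |⟨q⊗q, W − C*⟩| ≤ ‖q⊗q‖₂ · ‖W‖₂ · ε, where (q⊗q)(x,y) = q(x)q(y) and ε ≥ 0. Then ‖W − C*‖_□ ≤ (3/2)·‖W‖₂·ε. -/
open MeasureTheory Set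

/-- Graphon part of the constructive weak regularity cut-norm bound: if the
residual `W − C*` is nearly orthogonal to all tensor squares `q ⊗ q` with
`q` in a soft affiliation model `Q` (containing all indicators), then the cut
norm of `W − C*` is at most `(3/2)‖W‖₂ ε`. -/
theorem stmt9 (W Cstar : ℝ × ℝ → ℝ) (ε : ℝ) (hε : 0 ≤ ε)
    (hWbd : ∀ p, |W p| ≤ 1)
    (hsymm : ∀ x y : ℝ, W (x, y) - Cstar (x, y) = W (y, x) - Cstar (y, x))
    (hint : IntegrableOn (fun p => W p - Cstar p)
      (Icc (0:ℝ) 1 ×ˢ Icc (0:ℝ) 1))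
    (Q : Set (ℝ → ℝ))
    (hQind : ∀ A : Set ℝ, MeasurableSet A → A ⊆ Icc (0:ℝ) 1 →
      (A.indicator (fun _ => (1:ℝ))) ∈ Q)
    (hip : ∀ q ∈ Q,
      |∫ p in Icc (0:ℝ) 1 ×ˢ Icc (0:ℝ) 1, q p.1 * q p.2 * (W p - Cstar p)| ≤
        Real.sqrt (∫ p in Icc (0:ℝ) 1 ×ˢ Icc (0:ℝ) 1, (q p.1 * q p.2) ^ 2)
          * Real.sqrt (∫ p in Icc (0:ℝ) 1 ×ˢ Icc (0:ℝ) 1, (W p) ^ 2) * ε) :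
    ∀ S T : Set ℝ, MeasurableSet S → MeasurableSet T →
      S ⊆ Icc (0:ℝ) 1 → T ⊆ Icc (0:ℝ) 1 →
      |∫ p in S ×ˢ T, (W p - Cstar p)| ≤
        3 / 2 * Real.sqrt (∫ p in Icc (0:ℝ) 1 ×ˢ Icc (0:ℝ) 1, (W p) ^ 2) * ε := by
  intro S T hS hT hSsub hTsub
  set I : Set ℝ := Icc (0:ℝ) 1 with hIdef
  set U : ℝ × ℝ → ℝ := fun p => W p - Cstar p with hUdef
  set c : ℝ := Real.sqrt (∫ p in I ×ˢ I, (W p) ^ 2) * ε with hcdef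
  have hc0 : 0 ≤ c := mul_nonneg (Real.sqrt_nonneg _) hε
  have hIvol : volume I = 1 := by rw [hIdef, Real.volume_Icc]; norm_num
  -- rewriting integrals of indicators over I×I as set integrals
  have ind_eq : ∀ (X Y : Set ℝ), MeasurableSet X → MeasurableSet Y →
      X ⊆ I → Y ⊆ I →
      ∫ p in I ×ˢ I, (X ×ˢ Y).indicator U p = ∫ p in X ×ˢ Y, U p := by
    intro X Y hX hY hXs hYs
    rw [setIntegral_indicator (hX.prod hY),
      inter_eq_self_of_subset_right (prod_mono hXs hYs)]
  -- integrability of indicators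
  have intg : ∀ (X Y : Set ℝ), MeasurableSet X → MeasurableSet Y →
      Integrable ((X ×ˢ Y).indicator U) (volume.restrict (I ×ˢ I)) :=
    fun X Y hX hY => hint.indicator (hX.prod hY)
  -- key bound for squares
  have key : ∀ A : Set ℝ, MeasurableSet A → A ⊆ I →
      |∫ p in A ×ˢ A, U p| ≤ (volume A).toReal * c := by
    intro A hA hAsub
    have hq := hip (A.indicator (fun _ => (1:ℝ))) (hQind A hA hAsub)
    have e1 : ∀ p : ℝ × ℝ,
        A.indicator (fun _ => (1:ℝ)) p.1 * A.indicator (fun _ => (1:ℝ)) p.2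
          * (W p - Cstar p) = (A ×ˢ A).indicator U p := by
      intro p
      by_cases h1 : p.1 ∈ A <;> by_cases h2 : p.2 ∈ A <;>
        simp [indicator_apply, Set.mem_prod, h1, h2, hUdef]
    have e2 : ∀ p : ℝ × ℝ,
        (A.indicator (fun _ => (1:ℝ)) p.1 * A.indicator (fun _ => (1:ℝ)) p.2) ^ 2
          = (A ×ˢ A).indicator (fun _ => (1:ℝ)) p := by
      intro p
      by_cases h1 : p.1 ∈ A <;> by_cases h2 : p.2 ∈ A <;>
        simp [indicator_apply, Set.mem_prod, h1, h2]
    rw [show (∫ p in I ×ˢ I,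
        A.indicator (fun _ => (1:ℝ)) p.1 * A.indicator (fun _ => (1:ℝ)) p.2
          * (W p - Cstar p)) = ∫ p in I ×ˢ I, (A ×ˢ A).indicator U p from
        integral_congr_ae (.of_forall e1),
      show (∫ p in I ×ˢ I,
        (A.indicator (fun _ => (1:ℝ)) p.1 * A.indicator (fun _ => (1:ℝ)) p.2) ^ 2)
          = ∫ p in I ×ˢ I, (A ×ˢ A).indicator (fun _ => (1:ℝ)) p from
        integral_congr_ae (.of_forall e2)] at hq
    rw [ind_eq A A hA hA hAsub hAsub] at hq
    have hvAA : volume (A ×ˢ A) = volume A * volume A := by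
      rw [Measure.volume_eq_prod, Measure.prod_prod]
    rw [setIntegral_indicator (hA.prod hA),
      inter_eq_self_of_subset_right (prod_mono hAsub hAsub),
      setIntegral_const, smul_eq_mul, mul_one, measureReal_def, hvAA, ENNReal.toReal_mul,
      Real.sqrt_mul_self ENNReal.toReal_nonneg] at hq
    calc |∫ p in A ×ˢ A, U p| ≤ (volume A).toReal *
        Real.sqrt (∫ p in I ×ˢ I, (W p) ^ 2) * ε := hq
      _ = (volume A).toReal * c := by rw [hcdef]; ring
  -- symmetry: ∫ over T×S equals ∫ over S×T
  have swap_int : ∫ p in T ×ˢ S, U p = ∫ p in S ×ˢ T, U p := by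
    have h1 : (volume : Measure (ℝ × ℝ)).restrict (T ×ˢ S)
        = ((volume : Measure ℝ).restrict T).prod ((volume : Measure ℝ).restrict S) := by
      rw [Measure.prod_restrict, ← Measure.volume_eq_prod]
    have h2 : (volume : Measure (ℝ × ℝ)).restrict (S ×ˢ T)
        = ((volume : Measure ℝ).restrict S).prod ((volume : Measure ℝ).restrict T) := by
      rw [Measure.prod_restrict, ← Measure.volume_eq_prod]
    rw [h1, h2]
    have hswap := (Measure.measurePreserving_swap
      (μ := (volume : Measure ℝ).restrict S)
      (ν := (volume : Measure ℝ).restrict T)).integral_comp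
      MeasurableEquiv.prodComm.measurableEmbedding U
    rw [← hswap]
    refine integral_congr_ae (.of_forall fun p => ?_)
    obtain ⟨x, y⟩ := p
    simp only [hUdef, Prod.swap_prod_mk]
    exact (hsymm x y).symm
  -- pointwise polarization identity
  set A : Set ℝ := S \ T with hAdef
  set B : Set ℝ := T \ S with hBdef
  set C : Set ℝ := S ∩ T with hCdef
  set D : Set ℝ := S ∪ T with hDdef
  have hAm : MeasurableSet A := hS.diff hT
  have hBm : MeasurableSet B := hT.diff hS
  have hCm : MeasurableSet C := hS.inter hT
  have hDm : MeasurableSet D := hS.union hT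
  have hAs : A ⊆ I := fun x hx => hSsub hx.1
  have hBs : B ⊆ I := fun x hx => hTsub hx.1
  have hCs : C ⊆ I := fun x hx => hSsub hx.1
  have hDs : D ⊆ I := union_subset hSsub hTsub
  have ptw : ∀ p : ℝ × ℝ,
      (D ×ˢ D).indicator U p + (C ×ˢ C).indicator U p
        = (A ×ˢ A).indicator U p + (B ×ˢ B).indicator U p
          + (S ×ˢ T).indicator U p + (T ×ˢ S).indicator U p := by
    intro p
    by_cases h1 : p.1 ∈ S <;> by_cases h2 : p.1 ∈ T <;>
      by_cases h3 : p.2 ∈ S <;> by_cases h4 : p.2 ∈ T <;>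
      simp [indicator_apply, Set.mem_prod, hAdef, hBdef, hCdef, hDdef,
        h1, h2, h3, h4] <;> ring
  -- integrated polarization identity
  have polar : (∫ p in D ×ˢ D, U p) + (∫ p in C ×ˢ C, U p)
      = (∫ p in A ×ˢ A, U p) + (∫ p in B ×ˢ B, U p)
        + (∫ p in S ×ˢ T, U p) + (∫ p in T ×ˢ S, U p) := by
    have hcongr : (∫ p in I ×ˢ I,
        ((D ×ˢ D).indicator U p + (C ×ˢ C).indicator U p))
        = ∫ p in I ×ˢ I, ((A ×ˢ A).indicator U p + (B ×ˢ B).indicator U p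
            + (S ×ˢ T).indicator U p + (T ×ˢ S).indicator U p) :=
      integral_congr_ae (.of_forall ptw)
    have i2 : Integrable (fun p : ℝ × ℝ =>
        (A ×ˢ A).indicator U p + (B ×ˢ B).indicator U p)
        (volume.restrict (I ×ˢ I)) := (intg A A hAm hAm).add (intg B B hBm hBm)
    have i3 : Integrable (fun p : ℝ × ℝ =>
        (A ×ˢ A).indicator U p + (B ×ˢ B).indicator U p + (S ×ˢ T).indicator U p)
        (volume.restrict (I ×ˢ I)) := i2.add (intg S T hS hT)
    rw [integral_add (intg D D hDm hDm) (intg C C hCm hCm),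
      integral_add i3 (intg T S hT hS),
      integral_add i2 (intg S T hS hT),
      integral_add (intg A A hAm hAm) (intg B B hBm hBm)] at hcongr
    rw [ind_eq D D hDm hDm hDs hDs, ind_eq C C hCm hCm hCs hCs,
      ind_eq A A hAm hAm hAs hAs, ind_eq B B hBm hBm hBs hBs,
      ind_eq S T hS hT hSsub hTsub, ind_eq T S hT hS hTsub hSsub] at hcongr
    exact hcongr
  -- measure bookkeeping
  have hvolle : ∀ X : Set ℝ, X ⊆ I → volume X ≤ 1 := by
    intro X hX
    calc volume X ≤ volume I := measure_mono hX
      _ = 1 := hIvol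
  have hfin : ∀ X : Set ℝ, X ⊆ I → volume X ≠ ⊤ :=
    fun X hX => ne_top_of_le_ne_top (by simp) (hvolle X hX)
  have hABdisj : Disjoint A B := disjoint_sdiff_sdiff
  have hABCdisj : Disjoint (A ∪ B) C := by
    rw [disjoint_union_left]
    constructor
    · exact Set.disjoint_left.mpr fun x hx hx' => hx.2 hx'.2
    · exact Set.disjoint_left.mpr fun x hx hx' => hx.2 hx'.1
  have hABCD : A ∪ B ∪ C = D := by
    rw [hAdef, hBdef, hCdef, hDdef]
    ext x
    simp only [mem_union, mem_diff, mem_inter_iff]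
    tauto
  have hmeas_sum : volume A + volume B + volume C = volume D := by
    rw [← measure_union hABdisj hBm, ← measure_union hABCdisj hCm, hABCD]
  have hsum : (volume A).toReal + (volume B).toReal + (volume C).toReal
      = (volume D).toReal := by
    rw [← ENNReal.toReal_add (hfin A hAs) (hfin B hBs),
      ← ENNReal.toReal_add (ENNReal.add_ne_top.mpr ⟨hfin A hAs, hfin B hBs⟩) (hfin C hCs),
      hmeas_sum]
  have hDle : (volume D).toReal ≤ 1 := by
    have h := hvolle D hDs
    simpa using ENNReal.toReal_mono ENNReal.one_ne_top h
  -- combine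
  have kA := key A hAm hAs
  have kB := key B hBm hBs
  have kC := key C hCm hCs
  have kD := key D hDm hDs
  have h2ST : 2 * (∫ p in S ×ˢ T, U p)
      = (∫ p in D ×ˢ D, U p) + (∫ p in C ×ˢ C, U p)
        - (∫ p in A ×ˢ A, U p) - (∫ p in B ×ˢ B, U p) := by
    rw [polar, swap_int]; ring
  have habs : |∫ p in S ×ˢ T, U p| ≤ (volume D).toReal * c := by
    have h1 : |2 * (∫ p in S ×ˢ T, U p)| ≤
        ((volume D).toReal + (volume C).toReal + (volume A).toReal
          + (volume B).toReal) * c := by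
      rw [h2ST]
      calc |(∫ p in D ×ˢ D, U p) + (∫ p in C ×ˢ C, U p)
            - (∫ p in A ×ˢ A, U p) - (∫ p in B ×ˢ B, U p)|
          ≤ |∫ p in D ×ˢ D, U p| + |∫ p in C ×ˢ C, U p|
            + |∫ p in A ×ˢ A, U p| + |∫ p in B ×ˢ B, U p| := by
            exact (abs_sub _ _).trans (by
              gcongr
              exact (abs_sub _ _).trans (by gcongr; exact abs_add_le _ _))
        _ ≤ ((volume D).toReal + (volume C).toReal + (volume A).toReal
            + (volume B).toReal) * c := by
            rw [add_mul, add_mul, add_mul]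
            gcongr <;> assumption
    rw [abs_mul, abs_two] at h1
    nlinarith [abs_nonneg (∫ p in S ×ˢ T, U p), hsum, hc0]
  have hfinal : (volume D).toReal * c ≤ 3 / 2 * c := by
    nlinarith [(ENNReal.toReal_nonneg : (0:ℝ) ≤ (volume D).toReal), hDle, hc0]
  calc |∫ p in S ×ˢ T, U p| ≤ (volume D).toReal * c := habs
    _ ≤ 3 / 2 * c := hfinal
    _ = 3 / 2 * Real.sqrt (∫ p in I ×ˢ I, (W p) ^ 2) * ε := by rw [hcdef]; ring
end

section
/- Let a_{i,j} be entries of a graph adjacency-like symmetric function and let P = {N_1,...,N_k} be a partition of the node set N of a graph G. Define the step-graph G^P by the adjacency matrix a^P_{i,j} = e_G(N_{q_i}, N_{q_j})/(|N_{q_i}|·|N_{q_j}|), where q_i is the index of the class containing node i and e_G(U,S) counts edges from U to S. Then the cut norm of the difference of induced graphons equals the irregularity: ‖W_G − W_{G^P}‖_□ = irreg_G(P), where irreg_G(P) = max_{U,S ⊆ N} |e_G(U,S) − e_P(U,S)|/|N|², and e_P(U,S) = Σ_{i,j} (e_G(N_i,N_j)/(|N_i||N_j|))·|N_i ∩ U|·|N_j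 ∩ S|. -/
open MeasureTheory Set

/-- The node of `[0,1]` coordinate `x` in a graph on `n` nodes:
`⌈x·n⌉` with the convention `⌈0⌉ = 1`, as a `Fin n` index. -/
noncomputable def nodeOf (n : ℕ) (hn : 0 < n) (x : ℝ) : Fin n :=
  ⟨min (n - 1) (max 1 ⌈x * n⌉₊ - 1), by omega⟩

noncomputable def Jset (n : ℕ) (i : Fin n) : Set ℝ :=
  if (i : ℕ) = 0 then Icc 0 (1 / n) else Ioc ((i : ℕ) / n) (((i : ℕ) + 1) / n)

lemma Jset_measurable (n : ℕ) (i : Fin n) : MeasurableSet (Jset n i) := by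
  unfold Jset; split <;> measurability

lemma Jset_volume (n : ℕ) (i : Fin n) : volume (Jset n i) = ENNReal.ofReal (1 / n) := by
  unfold Jset
  have hn : (0:ℝ) < n := by exact_mod_cast i.pos
  split
  · rw [Real.volume_Icc]; norm_num
  · rw [Real.volume_Ioc]
    congr 1
    field_simp
    ring

lemma nodeOf_eq_of_mem {n : ℕ} (hn : 0 < n) {i : Fin n} {x : ℝ}
    (hx : x ∈ Jset n i) : nodeOf n hn x = i := by
  have hnR : (0:ℝ) < n := by exact_mod_cast hn
  unfold Jset at hx
  apply Fin.ext
  show min (n - 1) (max 1 ⌈x * n⌉₊ - 1) = i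
  have hi : (i : ℕ) ≤ n - 1 := by omega
  split at hx
  · rename_i h0
    have hx1 : x * n ≤ 1 := by
      rw [← le_div_iff₀ hnR]; simpa using hx.2
    have : ⌈x * n⌉₊ ≤ 1 := Nat.ceil_le.2 (by exact_mod_cast hx1)
    omega
  · rename_i h0
    have h1 : ((i : ℕ) : ℝ) < x * n := by
      have := hx.1
      rwa [div_lt_iff₀ hnR] at this
    have h2 : x * n ≤ (i : ℕ) + 1 := by
      have := hx.2
      rwa [le_div_iff₀ hnR] at this
    have hc : ⌈x * n⌉₊ = (i : ℕ) + 1 := by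
      rw [Nat.ceil_eq_iff (by omega)]
      constructor
      · simpa using h1
      · exact_mod_cast h2
    omega

lemma mem_Jset_nodeOf {n : ℕ} (hn : 0 < n) {x : ℝ} (hx : x ∈ Icc (0:ℝ) 1) :
    x ∈ Jset n (nodeOf n hn x) := by
  have hnR : (0:ℝ) < n := by exact_mod_cast hn
  have hex : ∃ i : Fin n, x ∈ Jset n i := by
    by_cases h : x ≤ 1 / n
    · refine ⟨⟨0, hn⟩, ?_⟩
      unfold Jset
      rw [if_pos rfl]
      exact ⟨hx.1, h⟩
    · push_neg at h
      set m := ⌈x * n⌉₊ with hm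
      have hx0 : 1 < x * n := by rwa [div_lt_iff₀ hnR] at h
      have hm2 : 2 ≤ m := by
        have h1 : 1 < (m : ℝ) := lt_of_lt_of_le hx0 (Nat.le_ceil _)
        have h2 : 1 < m := by exact_mod_cast h1
        omega
      have hmn : m ≤ n := Nat.ceil_le.2 (by nlinarith [hx.2])
      refine ⟨⟨m - 1, by omega⟩, ?_⟩
      have hne : (m - 1 : ℕ) ≠ 0 := by omega
      simp only [Jset, hne, if_false]
      have hlt : ((m - 1 : ℕ) : ℝ) < x * n := by
        have := (Nat.lt_ceil.1 (by omega : (m - 1 : ℕ) < ⌈x * n⌉₊))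
        exact this
      have hle : x * n ≤ ((m - 1 : ℕ) : ℝ) + 1 := by
        have h2 : x * n ≤ (m : ℝ) := Nat.le_ceil _
        push_cast [Nat.cast_sub (by omega : 1 ≤ m)]
        linarith
      constructor
      · rw [div_lt_iff₀ hnR]; exact_mod_cast hlt
      · rw [le_div_iff₀ hnR]; exact_mod_cast hle
  obtain ⟨i, hi⟩ := hex
  rwa [nodeOf_eq_of_mem hn hi]

lemma Jset_disjoint {n : ℕ} {i j : Fin n} (h : i ≠ j) :
    Disjoint (Jset n i) (Jset n j) := by
  rw [Set.disjoint_left]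
  intro x hxi hxj
  exact h ((nodeOf_eq_of_mem i.pos hxi).symm.trans (nodeOf_eq_of_mem i.pos hxj))

lemma integral_step {n : ℕ} (hn : 0 < n) (D : Fin n → Fin n → ℝ)
    {S T : Set ℝ} (hS : MeasurableSet S) (hT : MeasurableSet T)
    (hS1 : S ⊆ Icc (0:ℝ) 1) (hT1 : T ⊆ Icc (0:ℝ) 1) :
    ∫ p in S ×ˢ T, D (nodeOf n hn p.1) (nodeOf n hn p.2) =
      ∑ i : Fin n, ∑ j : Fin n, D i j *
        (volume (S ∩ Jset n i)).toReal * (volume (T ∩ Jset n j)).toReal := by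
  have hST : MeasurableSet (S ×ˢ T) := hS.prod hT
  have hEq : EqOn (fun p : ℝ × ℝ => D (nodeOf n hn p.1) (nodeOf n hn p.2))
      (fun p : ℝ × ℝ => ∑ i : Fin n, ∑ j : Fin n,
        Set.indicator ((Jset n i) ×ˢ (Jset n j)) (fun _ => D i j) p) (S ×ˢ T) := by
    intro p hp
    obtain ⟨hp1, hp2⟩ := hp
    have h1 := mem_Jset_nodeOf hn (hS1 hp1)
    have h2 := mem_Jset_nodeOf hn (hT1 hp2)
    simp only
    rw [Finset.sum_eq_single (nodeOf n hn p.1)]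
    · rw [Finset.sum_eq_single (nodeOf n hn p.2)]
      · rw [Set.indicator_of_mem (Set.mem_prod.mpr ⟨h1, h2⟩)]
      · intro j _ hj
        exact Set.indicator_of_notMem
          (fun hm => (Jset_disjoint hj).ne_of_mem hm.2 h2 rfl) _
      · intro h; exact absurd (Finset.mem_univ _) h
    · intro i _ hi
      apply Finset.sum_eq_zero
      intro j _
      exact Set.indicator_of_notMem
        (fun hm => (Jset_disjoint hi).ne_of_mem hm.1 h1 rfl) _
    · intro h; exact absurd (Finset.mem_univ _) h
  rw [setIntegral_congr_fun hST hEq]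
  have hint : ∀ i j : Fin n, Integrable
      (Set.indicator ((Jset n i) ×ˢ (Jset n j)) (fun _ => D i j))
      (volume.restrict (S ×ˢ T)) := by
    intro i j
    rw [integrable_indicator_iff ((Jset_measurable n i).prod (Jset_measurable n j))]
    refine integrableOn_const (lt_top_iff_ne_top.1 ?_) (by simp)
    rw [Measure.restrict_apply ((Jset_measurable n i).prod (Jset_measurable n j))]
    apply lt_of_le_of_lt (measure_mono (Set.inter_subset_left))
    rw [Measure.volume_eq_prod, Measure.prod_prod, Jset_volume, Jset_volume]
    exact ENNReal.mul_lt_top ENNReal.ofReal_lt_top ENNReal.ofReal_lt_top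
  rw [integral_finset_sum _ (fun i _ => integrable_finset_sum _ (fun j _ => hint i j))]
  refine Finset.sum_congr rfl (fun i _ => ?_)
  rw [integral_finset_sum _ (fun j _ => hint i j)]
  refine Finset.sum_congr rfl (fun j _ => ?_)
  rw [integral_indicator ((Jset_measurable n i).prod (Jset_measurable n j))]
  rw [setIntegral_const, measureReal_def, Measure.restrict_apply ((Jset_measurable n i).prod (Jset_measurable n j)),
    Set.prod_inter_prod, Measure.volume_eq_prod, Measure.prod_prod]
  rw [Set.inter_comm (Jset n i) S, Set.inter_comm (Jset n j) T]
  have h1 : volume (S ∩ Jset n i) ≠ ⊤ :=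
    (lt_of_le_of_lt (measure_mono Set.inter_subset_right)
      (by rw [Jset_volume]; exact ENNReal.ofReal_lt_top)).ne
  have h2 : volume (T ∩ Jset n j) ≠ ⊤ :=
    (lt_of_le_of_lt (measure_mono Set.inter_subset_right)
      (by rw [Jset_volume]; exact ENNReal.ofReal_lt_top)).ne
  rw [ENNReal.toReal_mul, smul_eq_mul]
  ring

lemma Jset_subset (n : ℕ) (i : Fin n) : Jset n i ⊆ Icc (0:ℝ) 1 := by
  have hn : (0:ℝ) < n := by exact_mod_cast i.pos
  have hin : ((i : ℕ) : ℝ) + 1 ≤ n := by exact_mod_cast i.isLt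
  unfold Jset
  split
  · apply Icc_subset_Icc le_rfl
    rw [div_le_one hn]; exact_mod_cast i.pos
  · intro x hx
    constructor
    · refine le_of_lt (lt_of_le_of_lt ?_ hx.1)
      positivity
    · refine hx.2.trans ?_
      rw [div_le_one hn]; exact hin

lemma union_inter_Jset {n : ℕ} (U : Finset (Fin n)) (i : Fin n) :
    (⋃ j ∈ U, Jset n j) ∩ Jset n i = if i ∈ U then Jset n i else ∅ := by
  split
  · rename_i h
    rw [Set.inter_eq_right]
    exact Set.subset_biUnion_of_mem h
  · rename_i h
    rw [Set.eq_empty_iff_forall_notMem]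
    rintro x ⟨hx1, hx2⟩
    simp only [Set.mem_iUnion] at hx1
    obtain ⟨j, hj, hxj⟩ := hx1
    have : j = i := (nodeOf_eq_of_mem i.pos hxj).symm.trans (nodeOf_eq_of_mem i.pos hx2)
    exact h (this ▸ hj)

lemma linear_bound {n : ℕ} (c : Fin n → ℝ) (s : Fin n → ℝ) (β : ℝ) (hβ : 0 ≤ β)
    (hs : ∀ i, 0 ≤ s i ∧ s i ≤ β) :
    ∑ i, c i * s i ≤ ∑ i ∈ Finset.univ.filter (fun i => 0 ≤ c i), c i * β := by
  rw [Finset.sum_filter]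
  apply Finset.sum_le_sum
  intro i _
  by_cases h : 0 ≤ c i
  · rw [if_pos h]
    exact mul_le_mul_of_nonneg_left (hs i).2 h
  · rw [if_neg h]
    push_neg at h
    exact mul_nonpos_of_nonpos_of_nonneg h.le (hs i).1

lemma bilinear_bound {n : ℕ} (D : Fin n → Fin n → ℝ) (s t : Fin n → ℝ) (β : ℝ)
    (hβ : 0 ≤ β) (hs : ∀ i, 0 ≤ s i ∧ s i ≤ β) (ht : ∀ j, 0 ≤ t j ∧ t j ≤ β) :
    ∃ U V : Finset (Fin n),
      ∑ i, ∑ j, D i j * s i * t j ≤ (∑ i ∈ U, ∑ j ∈ V, D i j) * β ^ 2 := by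
  set U := Finset.univ.filter (fun i => 0 ≤ ∑ j, D i j * t j) with hU
  set V := Finset.univ.filter (fun j => 0 ≤ ∑ i ∈ U, D i j) with hV
  refine ⟨U, V, ?_⟩
  have step1 : ∑ i, ∑ j, D i j * s i * t j
      ≤ ∑ i ∈ U, (∑ j, D i j * t j) * β := by
    have := linear_bound (fun i => ∑ j, D i j * t j) s β hβ hs
    calc ∑ i, ∑ j, D i j * s i * t j = ∑ i, (∑ j, D i j * t j) * s i := by
          refine Finset.sum_congr rfl (fun i _ => ?_)
          rw [Finset.sum_mul]
          exact Finset.sum_congr rfl (fun j _ => by ring)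
      _ ≤ _ := this
  have step2 : ∑ i ∈ U, (∑ j, D i j * t j) * β
      = (∑ j, (∑ i ∈ U, D i j) * t j) * β := by
    rw [← Finset.sum_mul]
    congr 1
    rw [Finset.sum_comm]
    refine Finset.sum_congr rfl (fun i _ => ?_)
    rw [Finset.sum_mul]
  have step3 : ∑ j, (∑ i ∈ U, D i j) * t j
      ≤ ∑ j ∈ V, (∑ i ∈ U, D i j) * β :=
    linear_bound _ t β hβ ht
  have step4 : (∑ j ∈ V, (∑ i ∈ U, D i j) * β) * β
      = (∑ i ∈ U, ∑ j ∈ V, D i j) * β ^ 2 := by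
    have h : ∑ i ∈ U, ∑ j ∈ V, D i j = ∑ j ∈ V, ∑ i ∈ U, D i j := Finset.sum_comm
    rw [h, ← Finset.sum_mul]
    ring
  calc ∑ i, ∑ j, D i j * s i * t j ≤ ∑ i ∈ U, (∑ j, D i j * t j) * β := step1
    _ = (∑ j, (∑ i ∈ U, D i j) * t j) * β := step2
    _ ≤ (∑ j ∈ V, (∑ i ∈ U, D i j) * β) * β :=
        mul_le_mul_of_nonneg_right step3 hβ
    _ = _ := step4

lemma fiber_sum {n k : ℕ} (Part : Fin k → Finset (Fin n))
    (hdisj : ∀ i j, i ≠ j → Disjoint (Part i) (Part j))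
    (c : Fin n → Fin k) (hc : ∀ i, i ∈ Part (c i))
    (U : Finset (Fin n)) (f : Fin k → ℝ) :
    ∑ i ∈ U, f (c i) = ∑ p : Fin k, ((Part p ∩ U).card : ℝ) * f p := by
  classical
  rw [← Finset.sum_fiberwise U c (fun i => f (c i))]
  refine Finset.sum_congr rfl (fun p _ => ?_)
  have hfil : U.filter (fun i => c i = p) = Part p ∩ U := by
    ext i
    simp only [Finset.mem_filter, Finset.mem_inter]
    constructor
    · rintro ⟨hiU, rfl⟩; exact ⟨hc i, hiU⟩
    · rintro ⟨hip, hiU⟩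
      refine ⟨hiU, ?_⟩
      by_contra hne
      have := Finset.disjoint_left.1 (hdisj p (c i) (Ne.symm hne)) hip
      exact this (hc i)
  have hcong : ∑ i ∈ U.filter (fun i => c i = p), f (c i)
      = ∑ i ∈ U.filter (fun i => c i = p), f p :=
    Finset.sum_congr rfl (fun i hi => by rw [(Finset.mem_filter.1 hi).2])
  rw [hcong, Finset.sum_const, hfil, nsmul_eq_mul]

/-- The cut norm of the difference between the graphon induced by a graph and
the graphon induced by its partition-coarsened (stochastic block) version
equals the combinatorial irregularity of the partition. -/
theorem stmt11 (n k : ℕ) (hn : 0 < n)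
    (a : Fin n → Fin n → ℝ)
    (ha01 : ∀ i j, a i j = 0 ∨ a i j = 1) (hasymm : ∀ i j, a i j = a j i)
    (Part : Fin k → Finset (Fin n))
    (hPart : ∀ i, (Part i).Nonempty)
    (hdisj : ∀ i j, i ≠ j → Disjoint (Part i) (Part j))
    (c : Fin n → Fin k) (hc : ∀ i, i ∈ Part (c i))
    (eG : Finset (Fin n) → Finset (Fin n) → ℝ)
    (heG : ∀ U S, eG U S = ∑ i ∈ U, ∑ j ∈ S, a i j)
    (aP : Fin n → Fin n → ℝ)
    (haP : ∀ i j, aP i j =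
      eG (Part (c i)) (Part (c j)) / ((Part (c i)).card * (Part (c j)).card))
    (eP : Finset (Fin n) → Finset (Fin n) → ℝ)
    (heP : ∀ U S, eP U S = ∑ i : Fin k, ∑ j : Fin k,
      eG (Part i) (Part j) / ((Part i).card * (Part j).card) *
        ((Part i ∩ U).card : ℝ) * ((Part j ∩ S).card : ℝ)) :
    sSup {y : ℝ | ∃ S T : Set ℝ, MeasurableSet S ∧ MeasurableSet T ∧
        S ⊆ Icc (0:ℝ) 1 ∧ T ⊆ Icc (0:ℝ) 1 ∧
        y = |∫ p in S ×ˢ T,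
          (a (nodeOf n hn p.1) (nodeOf n hn p.2)
            - aP (nodeOf n hn p.1) (nodeOf n hn p.2))|} =
      sSup {y : ℝ | ∃ U S : Finset (Fin n),
        y = |eG U S - eP U S| / (n : ℝ) ^ 2} := by
  classical
  have hnR : (0:ℝ) < n := by exact_mod_cast hn
  set D : Fin n → Fin n → ℝ := fun i j => a i j - aP i j with hD
  set g : Fin k → Fin k → ℝ :=
    fun p q => eG (Part p) (Part q) / ((Part p).card * (Part q).card) with hg
  set β : ℝ := 1 / n with hβ
  have hβ0 : 0 ≤ β := by positivity
  set LHSset := {y : ℝ | ∃ S T : Set ℝ, MeasurableSet S ∧ MeasurableSet T ∧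
        S ⊆ Icc (0:ℝ) 1 ∧ T ⊆ Icc (0:ℝ) 1 ∧
        y = |∫ p in S ×ˢ T,
          (a (nodeOf n hn p.1) (nodeOf n hn p.2)
            - aP (nodeOf n hn p.1) (nodeOf n hn p.2))|} with hLHS
  set RHSset := {y : ℝ | ∃ U S : Finset (Fin n),
        y = |eG U S - eP U S| / (n : ℝ) ^ 2} with hRHS
  -- key identity
  have key : ∀ U V : Finset (Fin n), ∑ i ∈ U, ∑ j ∈ V, D i j = eG U V - eP U V := by
    intro U V
    have h2 : ∑ i ∈ U, ∑ j ∈ V, aP i j = eP U V := by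
      have hone : ∀ i, ∑ j ∈ V, aP i j
          = ∑ q : Fin k, ((Part q ∩ V).card : ℝ) * g (c i) q := by
        intro i
        rw [show ∑ j ∈ V, aP i j = ∑ j ∈ V, g (c i) (c j) from
          Finset.sum_congr rfl (fun j _ => haP i j)]
        exact fiber_sum Part hdisj c hc V (g (c i))
      calc ∑ i ∈ U, ∑ j ∈ V, aP i j
          = ∑ i ∈ U, (fun p => ∑ q : Fin k, ((Part q ∩ V).card : ℝ) * g p q) (c i) :=
            Finset.sum_congr rfl (fun i _ => hone i)
        _ = ∑ p : Fin k, ((Part p ∩ U).card : ℝ) *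
              ∑ q : Fin k, ((Part q ∩ V).card : ℝ) * g p q :=
            fiber_sum Part hdisj c hc U (fun p => ∑ q : Fin k, ((Part q ∩ V).card : ℝ) * g p q)
        _ = eP U V := by
            rw [heP]
            refine Finset.sum_congr rfl fun p _ => ?_
            rw [Finset.mul_sum]
            refine Finset.sum_congr rfl fun q _ => ?_
            simp only [hg]
            ring
    rw [heG U V]
    simp only [hD]
    rw [← h2, ← Finset.sum_sub_distrib]
    exact Finset.sum_congr rfl fun i _ => Finset.sum_sub_distrib _ _
  -- RHS set facts
  have RHSfin : RHSset.Finite := by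
    apply Set.Finite.subset (Set.finite_range
      (fun p : Finset (Fin n) × Finset (Fin n) => |eG p.1 p.2 - eP p.1 p.2| / (n : ℝ) ^ 2))
    rintro y ⟨U, V, rfl⟩
    exact ⟨(U, V), rfl⟩
  have RHSbdd : BddAbove RHSset := RHSfin.bddAbove
  have RHSne : RHSset.Nonempty := ⟨_, ∅, ∅, rfl⟩
  have hmem : ∀ U V : Finset (Fin n),
      |∑ i ∈ U, ∑ j ∈ V, D i j| * β ^ 2 ∈ RHSset := by
    intro U V
    refine ⟨U, V, ?_⟩
    rw [key U V, hβ, div_pow, one_pow, mul_one_div]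
  have hvol : ∀ (U : Finset (Fin n)) (i : Fin n),
      (volume ((⋃ l ∈ U, Jset n l) ∩ Jset n i)).toReal = if i ∈ U then β else 0 := by
    intro U i
    rw [union_inter_Jset]
    split
    · rw [Jset_volume, ENNReal.toReal_ofReal hβ0]
    · simp
  -- block values belong to the LHS set
  have hblocks : ∀ U V : Finset (Fin n),
      |eG U V - eP U V| / (n : ℝ) ^ 2 ∈ LHSset := by
    intro U V
    have hSm := Finset.measurableSet_biUnion U (fun l _ => Jset_measurable n l)
    have hTm := Finset.measurableSet_biUnion V (fun l _ => Jset_measurable n l)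
    have hS1 : (⋃ l ∈ U, Jset n l) ⊆ Icc (0:ℝ) 1 :=
      Set.iUnion₂_subset fun l _ => Jset_subset n l
    have hT1 : (⋃ l ∈ V, Jset n l) ⊆ Icc (0:ℝ) 1 :=
      Set.iUnion₂_subset fun l _ => Jset_subset n l
    refine ⟨_, _, hSm, hTm, hS1, hT1, ?_⟩
    have hint : (∫ p in (⋃ l ∈ U, Jset n l) ×ˢ (⋃ l ∈ V, Jset n l),
        (a (nodeOf n hn p.1) (nodeOf n hn p.2) - aP (nodeOf n hn p.1) (nodeOf n hn p.2)))
        = ∑ i : Fin n, ∑ j : Fin n, D i j *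
          (volume ((⋃ l ∈ U, Jset n l) ∩ Jset n i)).toReal *
          (volume ((⋃ l ∈ V, Jset n l) ∩ Jset n j)).toReal :=
      integral_step hn D hSm hTm hS1 hT1
    rw [hint]
    have hcongr : ∑ i : Fin n, ∑ j : Fin n, D i j *
          (volume ((⋃ l ∈ U, Jset n l) ∩ Jset n i)).toReal *
          (volume ((⋃ l ∈ V, Jset n l) ∩ Jset n j)).toReal
        = ∑ i : Fin n, ∑ j : Fin n,
            D i j * (if i ∈ U then β else 0) * (if j ∈ V then β else 0) :=
      Finset.sum_congr rfl (fun i _ => Finset.sum_congr rfl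
        (fun j _ => by rw [hvol U i, hvol V j]))
    rw [hcongr]
    have hA : ∀ (W : Finset (Fin n)) (f : Fin n → ℝ),
        ∑ j : Fin n, f j * (if j ∈ W then β else 0) = ∑ j ∈ W, f j * β := by
      intro W f
      rw [← Finset.sum_subset (Finset.subset_univ W)
        (fun j _ hj => by rw [if_neg hj, mul_zero])]
      exact Finset.sum_congr rfl fun j hj => by rw [if_pos hj]
    have hsum : ∑ i : Fin n, ∑ j : Fin n,
          D i j * (if i ∈ U then β else 0) * (if j ∈ V then β else 0)
        = (∑ i ∈ U, ∑ j ∈ V, D i j) * β ^ 2 := by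
      calc ∑ i : Fin n, ∑ j : Fin n,
            D i j * (if i ∈ U then β else 0) * (if j ∈ V then β else 0)
          = ∑ i : Fin n, (∑ j ∈ V, D i j * β) * (if i ∈ U then β else 0) := by
            refine Finset.sum_congr rfl fun i _ => ?_
            have h1 : ∑ j : Fin n,
                (fun j => D i j * (if i ∈ U then β else 0)) j * (if j ∈ V then β else 0)
                = ∑ j ∈ V, (fun j => D i j * (if i ∈ U then β else 0)) j * β :=
              hA V _
            simp only at h1
            rw [h1, Finset.sum_mul]
            refine Finset.sum_congr rfl fun j _ => ?_
            ring
        _ = ∑ i ∈ U, (∑ j ∈ V, D i j * β) * β := hA U _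
        _ = (∑ i ∈ U, ∑ j ∈ V, D i j) * β ^ 2 := by
            rw [Finset.sum_mul]
            refine Finset.sum_congr rfl fun i _ => ?_
            rw [Finset.sum_mul, Finset.sum_mul]
            refine Finset.sum_congr rfl fun j _ => ?_
            ring
    rw [hsum, key U V, abs_mul, abs_of_nonneg (by positivity : (0:ℝ) ≤ β ^ 2), hβ,
      div_pow, one_pow, mul_one_div]
  -- every LHS element is at most sSup RHSset
  have hbound : ∀ y ∈ LHSset, y ≤ sSup RHSset := by
    rintro y ⟨S, T, hSm, hTm, hS1, hT1, rfl⟩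
    have hint : (∫ p in S ×ˢ T,
        (a (nodeOf n hn p.1) (nodeOf n hn p.2) - aP (nodeOf n hn p.1) (nodeOf n hn p.2)))
        = ∑ i : Fin n, ∑ j : Fin n, D i j *
          (volume (S ∩ Jset n i)).toReal * (volume (T ∩ Jset n j)).toReal :=
      integral_step hn D hSm hTm hS1 hT1
    rw [hint]
    set s : Fin n → ℝ := fun i => (volume (S ∩ Jset n i)).toReal with hs
    set t : Fin n → ℝ := fun j => (volume (T ∩ Jset n j)).toReal with ht
    have hsP : ∀ (W : Set ℝ) (i : Fin n), 0 ≤ (volume (W ∩ Jset n i)).toReal ∧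
        (volume (W ∩ Jset n i)).toReal ≤ β := by
      intro W i
      refine ⟨ENNReal.toReal_nonneg, ?_⟩
      have hle : volume (W ∩ Jset n i) ≤ ENNReal.ofReal β := by
        rw [← Jset_volume n i]
        exact measure_mono Set.inter_subset_right
      calc (volume (W ∩ Jset n i)).toReal
          ≤ (ENNReal.ofReal β).toReal := ENNReal.toReal_mono ENNReal.ofReal_ne_top hle
        _ = β := ENNReal.toReal_ofReal hβ0
    obtain ⟨U, V, hUV⟩ := bilinear_bound D s t β hβ0 (fun i => hsP S i) (fun j => hsP T j)
    obtain ⟨U', V', hUV'⟩ := bilinear_bound (fun i j => -D i j) s t β hβ0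
      (fun i => hsP S i) (fun j => hsP T j)
    rcases le_or_gt 0 (∑ i : Fin n, ∑ j : Fin n, D i j * s i * t j) with hpos | hneg
    · rw [abs_of_nonneg hpos]
      refine hUV.trans (le_trans ?_ (le_csSup RHSbdd (hmem U V)))
      exact mul_le_mul_of_nonneg_right (le_abs_self _) (by positivity)
    · rw [abs_of_neg hneg]
      have hneg' : ∑ i : Fin n, ∑ j : Fin n, (fun i j => -D i j) i j * s i * t j
          = -(∑ i : Fin n, ∑ j : Fin n, D i j * s i * t j) := by
        simp [neg_mul, Finset.sum_neg_distrib]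
      rw [← hneg']
      refine hUV'.trans (le_trans ?_ (le_csSup RHSbdd (hmem U' V')))
      have hnegsum : ∑ i ∈ U', ∑ j ∈ V', (fun i j => -D i j) i j
          = -(∑ i ∈ U', ∑ j ∈ V', D i j) := by
        simp [Finset.sum_neg_distrib]
      rw [hnegsum]
      exact mul_le_mul_of_nonneg_right (neg_le_abs _) (by positivity)
  have LHSne : LHSset.Nonempty := ⟨_, hblocks ∅ ∅⟩
  have LHSbdd : BddAbove LHSset := ⟨sSup RHSset, fun y hy => hbound y hy⟩
  apply le_antisymm
  · exact csSup_le LHSne hbound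
  · refine csSup_le RHSne fun y hy => ?_
    obtain ⟨U, V, rfl⟩ := hy
    exact le_csSup LHSbdd (hblocks U V)
end

section
/- For a kernel U : [0,1]² → ℝ that is a step function with respect to a partition of [0,1] into n intervals I_1,...,I_n (i.e., U is constant on each I_i × I_j), the cut norm sup_{S,T measurable} |∫_{S×T} U| is attained on sets S, T that are unions of the intervals I_i. -/
open MeasureTheory Set

lemma extremal {n : ℕ} (c l s : Fin n → ℝ)
    (h0 : ∀ i, 0 ≤ s i) (h1 : ∀ i, s i ≤ l i) :
    ∃ A : Finset (Fin n), |∑ i, s i * c i| ≤ |∑ i ∈ A, l i * c i| := by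
  by_cases h : 0 ≤ ∑ i, s i * c i
  · refine ⟨Finset.univ.filter (fun i => 0 ≤ c i), ?_⟩
    rw [abs_of_nonneg h]
    refine le_trans ?_ (le_abs_self _)
    rw [← Finset.sum_filter_add_sum_filter_not Finset.univ (fun i => 0 ≤ c i)]
    have h2 : ∑ i ∈ Finset.univ.filter (fun i => ¬ 0 ≤ c i), s i * c i ≤ 0 := by
      apply Finset.sum_nonpos
      intro i hi
      simp only [Finset.mem_filter] at hi
      exact mul_nonpos_of_nonneg_of_nonpos (h0 i) (le_of_not_ge hi.2)
    have h3 : ∑ i ∈ Finset.univ.filter (fun i => 0 ≤ c i), s i * c i ≤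
        ∑ i ∈ Finset.univ.filter (fun i => 0 ≤ c i), l i * c i := by
      apply Finset.sum_le_sum
      intro i hi
      simp only [Finset.mem_filter] at hi
      exact mul_le_mul_of_nonneg_right (h1 i) hi.2
    linarith
  · refine ⟨Finset.univ.filter (fun i => c i ≤ 0), ?_⟩
    push_neg at h
    rw [abs_of_neg h]
    refine le_trans ?_ (neg_le_abs _)
    rw [neg_le_neg_iff]
    rw [← Finset.sum_filter_add_sum_filter_not Finset.univ (fun i => c i ≤ 0)]
    have h2 : 0 ≤ ∑ i ∈ Finset.univ.filter (fun i => ¬ c i ≤ 0), s i * c i := by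
      apply Finset.sum_nonneg
      intro i hi
      simp only [Finset.mem_filter] at hi
      exact mul_nonneg (h0 i) (le_of_not_ge hi.2)
    have h3 : ∑ i ∈ Finset.univ.filter (fun i => c i ≤ 0), l i * c i ≤
        ∑ i ∈ Finset.univ.filter (fun i => c i ≤ 0), s i * c i := by
      apply Finset.sum_le_sum
      intro i hi
      simp only [Finset.mem_filter] at hi
      exact mul_le_mul_of_nonpos_right (h1 i) hi.2
    linarith

lemma formula {n : ℕ} (_hn : 0 < n) (t : Fin (n+1) → ℝ) (hmono : Monotone t)
    (ht0 : t 0 = 0) (htn : t (Fin.last n) = 1)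
    (I : Fin n → Set ℝ) (hI : ∀ i, I i = Ico (t i.castSucc) (t i.succ))
    (U : ℝ × ℝ → ℝ) (u : Fin n → Fin n → ℝ)
    (hstep : ∀ i j : Fin n, ∀ x ∈ I i, ∀ y ∈ I j, U (x, y) = u i j)
    (hint : IntegrableOn U (Icc (0:ℝ) 1 ×ˢ Icc (0:ℝ) 1))
    (S T : Set ℝ) (hS : MeasurableSet S) (hT : MeasurableSet T)
    (hS1 : S ⊆ Icc 0 1) (hT1 : T ⊆ Icc 0 1) :
    ∫ p in S ×ˢ T, U p =
      ∑ i, ∑ j, u i j * (volume (S ∩ I i)).toReal * (volume (T ∩ I j)).toReal := by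
  have hImeas : ∀ i, MeasurableSet (I i) := fun i => by rw [hI]; exact measurableSet_Ico
  have hIsub : ∀ i, I i ⊆ Icc (0:ℝ) 1 := by
    intro i x hx
    rw [hI] at hx
    have h1 : t 0 ≤ t i.castSucc := hmono (Fin.zero_le _)
    have h2 : t i.succ ≤ t (Fin.last n) := hmono (Fin.le_last _)
    exact ⟨ht0 ▸ h1.trans hx.1, le_of_lt (lt_of_lt_of_le hx.2 (htn ▸ h2))⟩
  have hcover : ∀ x : ℝ, 0 ≤ x → x < 1 → ∃ i, x ∈ I i := by
    intro x hx0 hx1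
    by_contra hcon
    push_neg at hcon
    have key : ∀ m : Fin (n+1), t m ≤ x := by
      intro m
      induction m using Fin.induction with
      | zero => rw [ht0]; exact hx0
      | succ i ih =>
        by_contra hlt
        exact hcon i (by rw [hI]; exact ⟨ih, lt_of_not_ge hlt⟩)
    have := key (Fin.last n)
    rw [htn] at this
    linarith
  have hdisj : Pairwise (Function.onFun Disjoint I) := by
    intro i j hij
    wlog hlt : i < j generalizing i j
    · exact (this hij.symm ((hij.lt_or_gt).resolve_left hlt)).symm
    have hle : t i.succ ≤ t j.castSucc := by
      apply hmono
      simp only [Fin.le_def, Fin.val_succ, Fin.coe_castSucc]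
      exact hlt
    simp only [Function.onFun, hI]
    rw [Set.disjoint_left]
    intro a ha ha'
    exact absurd (ha'.1) (not_le.2 (lt_of_lt_of_le ha.2 hle))
  -- the union
  set W : Set (ℝ × ℝ) := ⋃ p : Fin n × Fin n, (S ∩ I p.1) ×ˢ (T ∩ I p.2) with hW
  have hWsub : W ⊆ S ×ˢ T := by
    simp only [hW, iUnion_subset_iff]
    intro p q hq
    exact ⟨hq.1.1, hq.2.1⟩
  have hdiff : (S ×ˢ T) \ W ⊆ ({1} ×ˢ (univ : Set ℝ)) ∪ ((univ : Set ℝ) ×ˢ {1}) := by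
    rintro ⟨x, y⟩ ⟨⟨hxS, hyT⟩, hne⟩
    by_contra hcon
    simp only [mem_union, mem_prod, mem_singleton_iff, mem_univ, and_true, true_and,
      not_or] at hcon
    have hx1 : x < 1 := lt_of_le_of_ne (hS1 hxS).2 hcon.1
    have hy1 : y < 1 := lt_of_le_of_ne (hT1 hyT).2 hcon.2
    obtain ⟨i, hi⟩ := hcover x (hS1 hxS).1 hx1
    obtain ⟨j, hj⟩ := hcover y (hT1 hyT).1 hy1
    exact hne (mem_iUnion.2 ⟨(i, j), ⟨⟨hxS, hi⟩, ⟨hyT, hj⟩⟩⟩)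
  have hnull : volume ((S ×ˢ T) \ W) = 0 := by
    refine measure_mono_null hdiff ?_
    refine le_antisymm (le_trans (measure_union_le _ _) ?_) (zero_le)
    rw [Measure.volume_eq_prod, Measure.prod_prod, Measure.prod_prod]
    simp
  have haeeq : S ×ˢ T =ᵐ[volume] W := by
    rw [MeasureTheory.ae_eq_set]
    constructor
    · exact hnull
    · rw [diff_eq_empty.2 hWsub]; simp
  rw [setIntegral_congr_set haeeq, hW]
  have hmeas : ∀ p : Fin n × Fin n, MeasurableSet ((S ∩ I p.1) ×ˢ (T ∩ I p.2)) :=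
    fun p => (hS.inter (hImeas p.1)).prod (hT.inter (hImeas p.2))
  have hpd : Pairwise (Function.onFun Disjoint
      (fun p : Fin n × Fin n => (S ∩ I p.1) ×ˢ (T ∩ I p.2))) := by
    intro p q hpq
    simp only [Function.onFun]
    by_cases h1 : p.1 = q.1
    · have h2 : p.2 ≠ q.2 := fun h => hpq (Prod.ext h1 h)
      exact Set.disjoint_prod.2 (Or.inr (Disjoint.mono inter_subset_right
        inter_subset_right (hdisj h2)))
    · exact Set.disjoint_prod.2 (Or.inl (Disjoint.mono inter_subset_right
        inter_subset_right (hdisj h1)))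
  have hinteg : ∀ p : Fin n × Fin n, IntegrableOn U ((S ∩ I p.1) ×ˢ (T ∩ I p.2)) := by
    intro p
    apply hint.mono_set
    exact Set.prod_mono (inter_subset_left.trans hS1) (inter_subset_left.trans hT1)
  rw [integral_iUnion_fintype hmeas hpd hinteg, Fintype.sum_prod_type]
  refine Finset.sum_congr rfl fun i _ => Finset.sum_congr rfl fun j _ => ?_
  rw [setIntegral_congr_fun (hmeas (i, j)) (fun p hp => hstep i j p.1 hp.1.2 p.2 hp.2.2),
    setIntegral_const, Measure.volume_eq_prod, measureReal_def, Measure.prod_prod, ENNReal.toReal_mul,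
    smul_eq_mul]
  have h1 : volume (S ∩ I i) ≠ ⊤ := by
    refine ne_top_of_le_ne_top ?_ (measure_mono inter_subset_left)
    exact (measure_mono hS1).trans_lt (by simp) |>.ne
  ring

/-- The cut norm of a step kernel is attained on unions of the steps'
intervals. -/
theorem stmt12 (n : ℕ) (hn : 0 < n) (t : Fin (n + 1) → ℝ)
    (hmono : Monotone t) (ht0 : t 0 = 0) (htn : t (Fin.last n) = 1)
    (I : Fin n → Set ℝ) (hI : ∀ i : Fin n, I i = Ico (t i.castSucc) (t i.succ))
    (U : ℝ × ℝ → ℝ)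
    (u : Fin n → Fin n → ℝ)
    (hstep : ∀ i j : Fin n, ∀ x ∈ I i, ∀ y ∈ I j, U (x, y) = u i j)
    (hint : IntegrableOn U (Icc (0:ℝ) 1 ×ˢ Icc (0:ℝ) 1)) :
    ∃ A B : Finset (Fin n),
      ∀ S T : Set ℝ, MeasurableSet S → MeasurableSet T →
        S ⊆ Icc (0:ℝ) 1 → T ⊆ Icc (0:ℝ) 1 →
        |∫ p in S ×ˢ T, U p| ≤
          |∫ p in (⋃ i ∈ A, I i) ×ˢ (⋃ j ∈ B, I j), U p| := by
  have hImeas : ∀ i, MeasurableSet (I i) := fun i => by rw [hI]; exact measurableSet_Ico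
  have hIsub : ∀ i, I i ⊆ Icc (0:ℝ) 1 := by
    intro i x hx
    rw [hI] at hx
    have h1 : t 0 ≤ t i.castSucc := hmono (Fin.zero_le _)
    have h2 : t i.succ ≤ t (Fin.last n) := hmono (Fin.le_last _)
    exact ⟨ht0 ▸ h1.trans hx.1, le_of_lt (lt_of_lt_of_le hx.2 (htn ▸ h2))⟩
  have hIfin : ∀ i, volume (I i) ≠ ⊤ := fun i =>
    ((measure_mono (hIsub i)).trans_lt (by simp)).ne
  set ℓ : Fin n → ℝ := fun i => (volume (I i)).toReal with hℓ
  have hUmeas : ∀ A : Finset (Fin n), MeasurableSet (⋃ i ∈ A, I i) :=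
    fun A => A.measurableSet_biUnion (fun i _ => hImeas i)
  have hUsub : ∀ A : Finset (Fin n), (⋃ i ∈ A, I i) ⊆ Icc (0:ℝ) 1 :=
    fun A => iUnion₂_subset fun i _ => hIsub i
  have hdisj : Pairwise (Function.onFun Disjoint I) := by
    intro i j hij
    wlog hlt : i < j generalizing i j
    · exact (this hij.symm ((hij.lt_or_gt).resolve_left hlt)).symm
    have hle : t i.succ ≤ t j.castSucc := by
      apply hmono
      simp only [Fin.le_def, Fin.val_succ, Fin.coe_castSucc]
      exact hlt
    simp only [Function.onFun, hI]
    rw [Set.disjoint_left]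
    intro a ha ha'
    exact absurd (ha'.1) (not_le.2 (lt_of_lt_of_le ha.2 hle))
  have hvert : ∀ (A : Finset (Fin n)) (k : Fin n),
      (volume ((⋃ i ∈ A, I i) ∩ I k)).toReal = if k ∈ A then ℓ k else 0 := by
    intro A k
    by_cases hk : k ∈ A
    · have : (⋃ i ∈ A, I i) ∩ I k = I k :=
        inter_eq_right.2 (subset_biUnion_of_mem hk)
      rw [this, if_pos hk]
    · have : (⋃ i ∈ A, I i) ∩ I k = ∅ := by
        rw [eq_empty_iff_forall_notMem]
        rintro x ⟨hx1, hx2⟩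
        obtain ⟨i, hiA, hxi⟩ := mem_iUnion₂.1 hx1
        exact Set.disjoint_left.1 (hdisj (fun h => hk (by rw [← h]; exact hiA))) hxi hx2
      rw [this, if_neg hk]
      simp
  have step : ∀ (s : Finset (Fin n)) (g : Fin n → ℝ),
      ∑ i, (if i ∈ s then 1 else 0) * g i = ∑ i ∈ s, g i := by
    intro s g
    simp only [ite_mul, one_mul, zero_mul, Finset.sum_ite_mem, Finset.univ_inter]
  have hval : ∀ A B : Finset (Fin n),
      ∫ p in (⋃ i ∈ A, I i) ×ˢ (⋃ j ∈ B, I j), U p =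
        ∑ j ∈ B, ℓ j * ∑ i ∈ A, ℓ i * u i j := by
    intro A B
    rw [formula hn t hmono ht0 htn I hI U u hstep hint _ _ (hUmeas A) (hUmeas B)
      (hUsub A) (hUsub B)]
    calc ∑ i, ∑ j, u i j * (volume ((⋃ i' ∈ A, I i') ∩ I i)).toReal *
          (volume ((⋃ j' ∈ B, I j') ∩ I j)).toReal
        = ∑ i, ∑ j, (if i ∈ A then 1 else 0) *
            ((if j ∈ B then 1 else 0) * (ℓ j * (ℓ i * u i j))) := by
          refine Finset.sum_congr rfl fun i _ => Finset.sum_congr rfl fun j _ => ?_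
          rw [hvert A i, hvert B j]
          by_cases hi : i ∈ A <;> by_cases hj : j ∈ B <;> simp [hi, hj] <;> ring
      _ = ∑ i, (if i ∈ A then 1 else 0) *
            ∑ j, (if j ∈ B then 1 else 0) * (ℓ j * (ℓ i * u i j)) := by
          refine Finset.sum_congr rfl fun i _ => ?_; rw [Finset.mul_sum]
      _ = ∑ i ∈ A, ∑ j, (if j ∈ B then 1 else 0) * (ℓ j * (ℓ i * u i j)) := step A _
      _ = ∑ i ∈ A, ∑ j ∈ B, ℓ j * (ℓ i * u i j) := Finset.sum_congr rfl fun i _ => step B _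
      _ = ∑ j ∈ B, ℓ j * ∑ i ∈ A, ℓ i * u i j := by
          rw [Finset.sum_comm]
          exact Finset.sum_congr rfl fun j _ => (Finset.mul_sum _ _ _).symm
  obtain ⟨P, -, hmax⟩ := Finset.exists_max_image Finset.univ
    (fun AB : Finset (Fin n) × Finset (Fin n) =>
      |∫ p in (⋃ i ∈ AB.1, I i) ×ˢ (⋃ j ∈ AB.2, I j), U p|) Finset.univ_nonempty
  refine ⟨P.1, P.2, ?_⟩
  intro S T hS hT hS1 hT1
  set s : Fin n → ℝ := fun i => (volume (S ∩ I i)).toReal with hs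
  set τ : Fin n → ℝ := fun j => (volume (T ∩ I j)).toReal with hτ
  have hs0 : ∀ i, 0 ≤ s i := fun i => ENNReal.toReal_nonneg
  have hs1 : ∀ i, s i ≤ ℓ i := fun i =>
    ENNReal.toReal_mono (hIfin i) (measure_mono inter_subset_right)
  have hτ0 : ∀ j, 0 ≤ τ j := fun j => ENNReal.toReal_nonneg
  have hτ1 : ∀ j, τ j ≤ ℓ j := fun j =>
    ENNReal.toReal_mono (hIfin j) (measure_mono inter_subset_right)
  have hLHS : ∫ p in S ×ˢ T, U p = ∑ i, s i * (∑ j, u i j * τ j) := by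
    rw [formula hn t hmono ht0 htn I hI U u hstep hint S T hS hT hS1 hT1]
    refine Finset.sum_congr rfl fun i _ => ?_
    rw [Finset.mul_sum]
    exact Finset.sum_congr rfl fun j _ => by ring
  obtain ⟨A', hA'⟩ := extremal (fun i => ∑ j, u i j * τ j) ℓ s hs0 hs1
  have e2 : ∑ i ∈ A', ℓ i * (∑ j, u i j * τ j) = ∑ j, τ j * (∑ i ∈ A', ℓ i * u i j) := by
    calc ∑ i ∈ A', ℓ i * (∑ j, u i j * τ j)
        = ∑ i ∈ A', ∑ j, τ j * (ℓ i * u i j) := by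
          refine Finset.sum_congr rfl fun i _ => ?_
          rw [Finset.mul_sum]
          exact Finset.sum_congr rfl fun j _ => by ring
      _ = ∑ j, ∑ i ∈ A', τ j * (ℓ i * u i j) := Finset.sum_comm
      _ = ∑ j, τ j * (∑ i ∈ A', ℓ i * u i j) := by
          refine Finset.sum_congr rfl fun j _ => ?_
          rw [Finset.mul_sum]
  obtain ⟨B', hB'⟩ := extremal (fun j => ∑ i ∈ A', ℓ i * u i j) ℓ τ hτ0 hτ1
  have chain : |∫ p in S ×ˢ T, U p| ≤
      |∫ p in (⋃ i ∈ A', I i) ×ˢ (⋃ j ∈ B', I j), U p| := by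
    rw [hLHS, hval A' B']
    calc |∑ i, s i * (∑ j, u i j * τ j)|
        ≤ |∑ i ∈ A', ℓ i * (∑ j, u i j * τ j)| := hA'
      _ = |∑ j, τ j * (∑ i ∈ A', ℓ i * u i j)| := by rw [e2]
      _ ≤ |∑ j ∈ B', ℓ j * (∑ i ∈ A', ℓ i * u i j)| := hB'
  exact chain.trans (hmax (A', B') (Finset.mem_univ _))
end
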